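/- arXiv:1801.06517 — 8 statements merged into one kernel-verified Lean document; each statement's English description precedes it below -/
import Mathlib

section
/- Let 0 < α ≤ 2 and let C be a real number. Then the function f(x) = (4π²/x² + C²)^{α/2} − (π²/x² + C²)^{α/2} is monotonically decreasing on (0, ∞); that is, for all 0 < x₁ ≤ x₂ one has f(x₂) ≤ f(x₁). -/
/-!
With `a = π² / x²` and `p = α / 2 ∈ (0, 1]`, the function is `g (a)` for
`g t = (4 t + C²) ^ p - (t + C²) ^ p`, and `a` decreases in `x`. The function `g` is nondecreasing:
`g' t = p (4 (4 t + C²) ^ (p - 1) - (t + C²) ^ (p - 1)) ≥ 0`, because `4 t + C² ≤ 4 (t + C²)` and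
`p - 1 ≤ 0` give `4 (4 t + C²) ^ (p - 1) ≥ 4 ^ p (t + C²) ^ (p - 1)`.
-/

open Real Set

lemma rpow_sub_one_le_mul_rpow_sub_one {p k u v : ℝ} (hp0 : 0 ≤ p) (hp1 : p ≤ 1) (hk : 1 ≤ k)
    (hu : 0 < u) (hv : 0 < v) (hvu : v ≤ k * u) :
    u ^ (p - 1) ≤ k * v ^ (p - 1) := by
  have hk0 : 0 < k := by linarith
  calc u ^ (p - 1) ≤ k ^ p * u ^ (p - 1) :=
        le_mul_of_one_le_left (by positivity) (one_le_rpow hk hp0)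
    _ = k * (k * u) ^ (p - 1) := by
        rw [mul_rpow hk0.le hu.le, rpow_sub_one hk0.ne']
        field_simp
    _ ≤ k * v ^ (p - 1) :=
        mul_le_mul_of_nonneg_left (rpow_le_rpow_of_nonpos hv hvu (by linarith)) hk0.le

lemma monotoneOn_rpow_mul_add_sub_rpow_add {p k c : ℝ} (hp0 : 0 ≤ p) (hp1 : p ≤ 1) (hk : 1 ≤ k)
    (hc : 0 ≤ c) : MonotoneOn (fun t : ℝ => (k * t + c) ^ p - (t + c) ^ p) (Ici 0) := by
  refine monotoneOn_of_hasDerivWithinAt_nonneg (convex_Ici 0)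
    (f' := fun t => p * (k * (k * t + c) ^ (p - 1) - (t + c) ^ (p - 1)))
    (by fun_prop (disch := exact hp0)) (fun t ht => ?_) (fun t ht => ?_)
  all_goals
    rw [interior_Ici, mem_Ioi] at ht
    have hu : 0 < t + c := by linarith
    have hv : 0 < k * t + c := by nlinarith
  · have hlin : HasDerivAt (fun t : ℝ => k * t + c) k t := by
      simpa using ((hasDerivAt_id' t).const_mul k).add_const c
    have hshift : HasDerivAt (fun t : ℝ => t + c) 1 t := (hasDerivAt_id' t).add_const c
    refine (((hlin.rpow_const (Or.inl hv.ne')).sub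
      (hshift.rpow_const (Or.inl hu.ne'))).congr_deriv ?_).hasDerivWithinAt
    ring
  · exact mul_nonneg hp0 (sub_nonneg.mpr
      (rpow_sub_one_le_mul_rpow_sub_one hp0 hp1 hk hu hv (by nlinarith)))

theorem gap_aux_f_monotone_decreasing (α C : ℝ) (hα : 0 < α) (hα2 : α ≤ 2) :
    ∀ x₁ x₂ : ℝ, 0 < x₁ → x₁ ≤ x₂ →
      (4 * π ^ 2 / x₂ ^ 2 + C ^ 2) ^ (α / 2) - (π ^ 2 / x₂ ^ 2 + C ^ 2) ^ (α / 2)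
        ≤ (4 * π ^ 2 / x₁ ^ 2 + C ^ 2) ^ (α / 2) - (π ^ 2 / x₁ ^ 2 + C ^ 2) ^ (α / 2) := by
  intro x₁ x₂ hx₁ hx
  have hle : π ^ 2 / x₂ ^ 2 ≤ π ^ 2 / x₁ ^ 2 :=
    div_le_div_of_nonneg_left (by positivity) (by positivity) (pow_le_pow_left₀ hx₁.le hx 2)
  have h := monotoneOn_rpow_mul_add_sub_rpow_add (p := α / 2) (k := 4) (c := C ^ 2)
    (by linarith) (by linarith) (by norm_num) (sq_nonneg C)
    (by positivity : (0 : ℝ) ≤ π ^ 2 / x₂ ^ 2) (by positivity : (0 : ℝ) ≤ π ^ 2 / x₁ ^ 2) hle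
  simpa only [mul_div_assoc] using h
end

section
/- Let 0 < α ≤ 2 and let L₁ ≥ L₂ > 0 be real numbers. Set D = √(L₁² + L₂²) and d = L₂. Then (4π²/L₁² + π²/L₂²)^{α/2} − (π²/L₁² + π²/L₂²)^{α/2} ≥ (4π²/D² + π²/d²)^{α/2} − (π²/D² + π²/d²)^{α/2}. -/
/-!
With `w = π²/L₂²` fixed, both sides are values of `t ↦ (4t + w)^β - (t + w)^β`, `β = α/2`,
at `t = π²/L₁²` and at `t = π²/D² ≤ π²/L₁²`. This map is monotone on `t ≥ 0`: it factors as
`(t + w)^β · (((4t + w)/(t + w))^β - 1)`, a product of two nonnegative nondecreasing factors.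
-/

open Real

lemma mul_add_div_add_le_mul_add_div_add {c w u v : ℝ} (hc : 1 ≤ c) (hw : 0 < w) (hu : 0 ≤ u) (huv : u ≤ v) :
    (c * u + w) / (u + w) ≤ (c * v + w) / (v + w) := by
  rw [div_le_div_iff₀ (by linarith) (by linarith)]
  nlinarith [mul_nonneg (sub_nonneg.2 hc) (mul_nonneg hw.le (sub_nonneg.2 huv))]

lemma monotoneOn_rpow_mul_add_sub_rpow_add_s2 {c w β : ℝ} (hc : 1 ≤ c) (hw : 0 < w) (hβ : 0 ≤ β) :
    MonotoneOn (fun t => (c * t + w) ^ β - (t + w) ^ β) (Set.Ici 0) := by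
  intro u (hu : 0 ≤ u) v (hv : 0 ≤ v) huv
  have factor : ∀ t, 0 ≤ t → (c * t + w) ^ β - (t + w) ^ β
      = (t + w) ^ β * (((c * t + w) / (t + w)) ^ β - 1) := fun t ht => by
    rw [div_rpow (by nlinarith) (by linarith), mul_sub, mul_div_cancel₀ _
      (rpow_pos_of_pos (by linarith) β).ne', mul_one]
  have ratio_ge_one : 1 ≤ (c * u + w) / (u + w) := by
    rw [le_div_iff₀ (by linarith)]
    nlinarith
  simp only [factor u hu, factor v hv]
  apply mul_le_mul
  · exact rpow_le_rpow (by linarith) (by linarith) hβ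
  · exact sub_le_sub_right (rpow_le_rpow (by linarith) (mul_add_div_add_le_mul_add_div_add hc hw hu huv) hβ) 1
  · exact sub_nonneg.2 (one_le_rpow ratio_ge_one hβ)
  · exact (rpow_pos_of_pos (by linarith) β).le

theorem gap_box_2d_reduction_general (α L₁ L₂ : ℝ) (hα : 0 < α)
    (hL₂ : 0 < L₂) (hL : L₂ ≤ L₁)
    (D d : ℝ) (hD : D = Real.sqrt (L₁ ^ 2 + L₂ ^ 2)) (hd : d = L₂) :
    (4 * π ^ 2 / L₁ ^ 2 + π ^ 2 / L₂ ^ 2) ^ (α / 2)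
        - (π ^ 2 / L₁ ^ 2 + π ^ 2 / L₂ ^ 2) ^ (α / 2)
      ≥ (4 * π ^ 2 / D ^ 2 + π ^ 2 / d ^ 2) ^ (α / 2)
        - (π ^ 2 / D ^ 2 + π ^ 2 / d ^ 2) ^ (α / 2) := by
  have hL₁ : 0 < L₁ := hL₂.trans_le hL
  have hD2 : D ^ 2 = L₁ ^ 2 + L₂ ^ 2 := by rw [hD, sq_sqrt (by positivity)]
  have hDL₁ : π ^ 2 / D ^ 2 ≤ π ^ 2 / L₁ ^ 2 := by
    rw [hD2]
    exact div_le_div_of_nonneg_left (by positivity) (by positivity) (by nlinarith)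
  have gap_mono := monotoneOn_rpow_mul_add_sub_rpow_add_s2 (c := 4) (w := π ^ 2 / L₂ ^ 2)
    (β := α / 2) (by norm_num) (by positivity) (by positivity)
    (Set.mem_Ici.2 (by positivity)) (Set.mem_Ici.2 (by positivity)) hDL₁
  simp only [mul_div_assoc, hd]
  exact gap_mono

theorem gap_box_2d_reduction (α L₁ L₂ : ℝ) (hα : 0 < α) (hα2 : α ≤ 2)
    (hL₂ : 0 < L₂) (hL : L₂ ≤ L₁)
    (D d : ℝ) (hD : D = Real.sqrt (L₁ ^ 2 + L₂ ^ 2)) (hd : d = L₂) :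
    (4 * π ^ 2 / L₁ ^ 2 + π ^ 2 / L₂ ^ 2) ^ (α / 2)
        - (π ^ 2 / L₁ ^ 2 + π ^ 2 / L₂ ^ 2) ^ (α / 2)
      ≥ (4 * π ^ 2 / D ^ 2 + π ^ 2 / d ^ 2) ^ (α / 2)
        - (π ^ 2 / D ^ 2 + π ^ 2 / d ^ 2) ^ (α / 2) :=
  gap_box_2d_reduction_general α L₁ L₂ hα hL₂ hL D d hD hd
end

section
/- Let 0 < α ≤ 2 and let L₁ ≥ L₂ ≥ L₃ > 0 be real numbers. Set D = √(L₁² + L₂² + L₃²) and d = L₃. Then (4π²/L₁² + π²/L₂² + π²/L₃²)^{α/2} − (π²/L₁² + π²/L₂² + π²/L₃²)^{α/2} ≥ (4π²/D² + 2π²/d²)^{α/2} − (π²/D² + 2π²/d²)^{α/2}. -/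
/-!
With `t = α / 2 ∈ (0, 1]`, the gap `(v + q)^t - v^t` equals `q^t φ(v / q)` with
`φ(x) = (x + 1)^t - x^t`, which is nonnegative and, by concavity of `x ↦ x^t`, antitone. Both sides
of the inequality are such gaps: `v = Σ π²/Lᵢ²`, `q = 3π²/L₁²` on the left and
`w = π²/D² + 2π²/d²`, `r = 3π²/D²` on the right. Since `D ≥ L₁` we have `r ≤ q`, and `L₃ ≤ L₂`
gives `v / q ≤ w / r`, so the right gap is at most the left one.
-/

theorem ConcaveOn.sub_le_sub_of_le {𝕜 : Type*} [Field 𝕜] [LinearOrder 𝕜] [IsStrictOrderedRing 𝕜]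
    {s : Set 𝕜} {f : 𝕜 → 𝕜} (hf : ConcaveOn 𝕜 s f) {x y d : 𝕜} (hx : x ∈ s) (hyd : y + d ∈ s)
    (hxy : x ≤ y) (hd : 0 ≤ d) : f (y + d) - f y ≤ f (x + d) - f x := by
  rcases (add_le_add hxy hd).eq_or_lt with h | h
  · obtain rfl : d = 0 := by linarith
    obtain rfl : x = y := by linarith
    simp
  have hpos : 0 < y + d - x := by linarith
  -- `y` and `x + d` are the two convex combinations of `x` and `y + d` with weights `μ, 1 - μ`
  -- and `1 - μ, μ`, where `μ = d / (y + d - x)`.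
  have hy := hf.2 hx hyd (div_nonneg hd hpos.le) (div_nonneg (sub_nonneg.2 hxy) hpos.le)
    (by field_simp; ring)
  have hxd := hf.2 hx hyd (div_nonneg (sub_nonneg.2 hxy) hpos.le) (div_nonneg hd hpos.le)
    (by field_simp; ring)
  simp only [smul_eq_mul] at hy hxd
  have ey : d / (y + d - x) * x + (y - x) / (y + d - x) * (y + d) = y := by field_simp; ring
  have exd : (y - x) / (y + d - x) * x + d / (y + d - x) * (y + d) = x + d := by field_simp; ring
  rw [ey] at hy
  rw [exd] at hxd
  have : d / (y + d - x) + (y - x) / (y + d - x) = 1 := by field_simp; ring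
  linear_combination hy + hxd - (f x + f (y + d)) * this

namespace Real

variable {t : ℝ}

theorem rpow_add_sub_rpow_antitoneOn (ht₀ : 0 ≤ t) (ht₁ : t ≤ 1) (d : ℝ) (hd : 0 ≤ d) :
    AntitoneOn (fun x : ℝ ↦ (x + d) ^ t - x ^ t) (Set.Ici 0) := fun x hx y _ hxy ↦
  (concaveOn_rpow ht₀ ht₁).sub_le_sub_of_le hx (Set.mem_Ici.2 (by grind)) hxy hd

theorem rpow_add_sub_rpow_eq_mul (x : ℝ) {r : ℝ} (hx : 0 ≤ x) (hr : 0 < r) :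
    (x + r) ^ t - x ^ t = r ^ t * ((x / r + 1) ^ t - (x / r) ^ t) := by
  rw [mul_sub, ← mul_rpow hr.le (by positivity), ← mul_rpow hr.le (by positivity)]
  congr 2 <;> field_simp

theorem rpow_add_sub_rpow_le_of_div_le (ht₀ : 0 ≤ t) (ht₁ : t ≤ 1) {v w q r : ℝ} (hv : 0 ≤ v)
    (hr : 0 < r) (hrq : r ≤ q) (hvw : v / q ≤ w / r) :
    (w + r) ^ t - w ^ t ≤ (v + q) ^ t - v ^ t := by
  have hq : 0 < q := hr.trans_le hrq
  have hw : 0 ≤ w := by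
    have hwr : 0 ≤ w / r := (div_nonneg hv hq.le).trans hvw
    simpa [hr.ne'] using mul_nonneg hwr hr.le
  have hincr : 0 ≤ (w / r + 1) ^ t - (w / r) ^ t :=
    sub_nonneg.2 (rpow_le_rpow (by positivity) (by linarith) ht₀)
  rw [rpow_add_sub_rpow_eq_mul w hw hr, rpow_add_sub_rpow_eq_mul v hv hq]
  calc r ^ t * ((w / r + 1) ^ t - (w / r) ^ t)
      ≤ q ^ t * ((w / r + 1) ^ t - (w / r) ^ t) := by gcongr
    _ ≤ q ^ t * ((v / q + 1) ^ t - (v / q) ^ t) :=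
      mul_le_mul_of_nonneg_left (rpow_add_sub_rpow_antitoneOn ht₀ ht₁ 1 zero_le_one
        (div_nonneg hv hq.le) (div_nonneg hw hr.le) hvw) (by positivity)

end Real

open Real

theorem gap_box_3d_reduction (α L₁ L₂ L₃ : ℝ) (hα : 0 < α) (hα2 : α ≤ 2)
    (hL₃ : 0 < L₃) (hL32 : L₃ ≤ L₂) (hL21 : L₂ ≤ L₁)
    (D d : ℝ) (hD : D = Real.sqrt (L₁ ^ 2 + L₂ ^ 2 + L₃ ^ 2)) (hd : d = L₃) :
    (4 * π ^ 2 / L₁ ^ 2 + π ^ 2 / L₂ ^ 2 + π ^ 2 / L₃ ^ 2) ^ (α / 2)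
        - (π ^ 2 / L₁ ^ 2 + π ^ 2 / L₂ ^ 2 + π ^ 2 / L₃ ^ 2) ^ (α / 2)
      ≥ (4 * π ^ 2 / D ^ 2 + 2 * π ^ 2 / d ^ 2) ^ (α / 2)
        - (π ^ 2 / D ^ 2 + 2 * π ^ 2 / d ^ 2) ^ (α / 2) := by
  subst d
  have hL₁ : 0 < L₁ := by linarith
  have hD_sq : D ^ 2 = L₁ ^ 2 + L₂ ^ 2 + L₃ ^ 2 := by rw [hD, sq_sqrt (by positivity)]
  -- with `e = π²/D²` and `aᵢ = π²/Lᵢ²` the comparison reduces to `(a₂ + a₃) e ≤ 2 a₁ a₃`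
  have he : 0 < π ^ 2 / D ^ 2 := by rw [hD_sq]; positivity
  have he₁ : π ^ 2 / D ^ 2 ≤ π ^ 2 / L₁ ^ 2 := by
    rw [hD_sq]; gcongr; nlinarith
  have h₂₃ : π ^ 2 / L₂ ^ 2 ≤ π ^ 2 / L₃ ^ 2 := by gcongr
  have key := rpow_add_sub_rpow_le_of_div_le (t := α / 2) (by linarith) (by linarith)
    (v := π ^ 2 / L₁ ^ 2 + π ^ 2 / L₂ ^ 2 + π ^ 2 / L₃ ^ 2) (q := 3 * (π ^ 2 / L₁ ^ 2))
    (w := π ^ 2 / D ^ 2 + 2 * (π ^ 2 / L₃ ^ 2)) (r := 3 * (π ^ 2 / D ^ 2))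
    (by positivity) (by positivity) (by linarith) (by
      rw [div_le_div_iff₀ (by positivity) (by positivity)]
      nlinarith [mul_le_mul_of_nonneg_left he₁ (by positivity : (0 : ℝ) ≤ π ^ 2 / L₃ ^ 2)])
  convert key using 3 <;> ring
end

section
/- Let n ≥ 2 be an integer, let 0 < α ≤ 2, and let 0 < d ≤ D be real numbers. Then (4π²/D² + (n−1)π²/d²)^{α/2} − (π²/D² + (n−1)π²/d²)^{α/2} ≥ (α π^α / (n+2)^{1−α/2}) · d^{2−α}/D². -/
/-! Concavity of `t ↦ t ^ (α / 2)` bounds the difference from below by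
`(α / 2) b ^ (α / 2 - 1) (b - a)`, where `b - a = 3π²/D²` and, since `d ≤ D`, `b ≤ (n + 3)π²/d²`.
Trading `n + 3` for `n + 2` costs a factor `((n + 3) / (n + 2)) ^ (1 - α / 2) ≤ 3 / 2`, which the
`3` of `b - a` pays for against the `2` of `α / 2`. -/

open Real

lemma mul_rpow_sub_one_mul_sub_le_rpow_sub_rpow {a b p : ℝ} (ha : 0 ≤ a) (hab : a ≤ b)
    (hp0 : 0 ≤ p) (hp1 : p ≤ 1) : p * b ^ (p - 1) * (b - a) ≤ b ^ p - a ^ p := by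
  obtain rfl | hb := (ha.trans hab).eq_or_lt
  · obtain rfl : a = 0 := le_antisymm hab ha
    simp
  have bernoulli : (a / b) ^ p ≤ 1 + p * (a / b - 1) := by
    simpa using rpow_one_add_le_one_add_mul_self (s := a / b - 1)
      (by linarith [div_nonneg ha hb.le]) hp0 hp1
  have ha_rpow : a ^ p = (a / b) ^ p * b ^ p := by
    rw [← mul_rpow (div_nonneg ha hb.le) hb.le, div_mul_cancel₀ _ hb.ne']
  have hb_rpow : b ^ (p - 1) = b ^ p / b := by
    rw [rpow_sub hb, rpow_one]
  have scaled := mul_le_mul_of_nonneg_right bernoulli (rpow_nonneg hb.le p)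
  rw [ha_rpow, hb_rpow]
  field_simp at scaled ⊢
  linarith

lemma rpow_le_div_mul_rpow {x y q : ℝ} (hx : 0 < x) (hxy : x ≤ y) (hq : -1 ≤ q) :
    x ^ q ≤ y / x * y ^ q := by
  have hy : 0 < y := hx.trans_le hxy
  have hratio : (y / x) ^ (-q) ≤ y / x := by
    simpa using rpow_le_rpow_of_exponent_le ((one_le_div hx).2 hxy) (by linarith : -q ≤ 1)
  calc x ^ q = (y / x) ^ (-q) * y ^ q := by
        rw [div_rpow hy.le hx.le, rpow_neg hy.le, rpow_neg hx.le]
        field_simp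
    _ ≤ y / x * y ^ q := by gcongr

/-- The right-hand side of the gap bound in the form `α λ ^ (α / 2 - 1) π² / D²`,
with `λ = (n + 2) π² / d²`. -/
lemma mul_rpow_div_rpow_mul_div_eq {α c x d D : ℝ} (hc : 0 < c) (hx : 0 < x) (hd : 0 < d) :
    α * x ^ α / c ^ (1 - α / 2) * (d ^ (2 - α) / D ^ 2)
      = α * (c * (x ^ 2 / d ^ 2)) ^ (α / 2 - 1) * (x ^ 2 / D ^ 2) := by
  have hsq : ∀ {y : ℝ}, 0 < y → (y ^ 2) ^ (α / 2 - 1) = y ^ α / y ^ 2 := fun hy => by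
    rw [← rpow_natCast, ← rpow_mul hy.le, show ((2 : ℕ) : ℝ) * (α / 2 - 1) = α - 2 by ring,
      rpow_sub hy]
    norm_num
  rw [mul_rpow hc.le (by positivity), div_rpow (by positivity) (by positivity), hsq hx, hsq hd,
    rpow_sub hd, rpow_sub hc, rpow_sub hc, rpow_one, rpow_two]
  field_simp

theorem gap_mean_value_step (n : ℕ) (hn : 2 ≤ n) (α d D : ℝ)
    (hα : 0 < α) (hα2 : α ≤ 2) (hd : 0 < d) (hdD : d ≤ D) :
    (4 * π ^ 2 / D ^ 2 + (n - 1) * π ^ 2 / d ^ 2) ^ (α / 2)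
        - (π ^ 2 / D ^ 2 + (n - 1) * π ^ 2 / d ^ 2) ^ (α / 2)
      ≥ α * π ^ α / ((n : ℝ) + 2) ^ (1 - α / 2) * (d ^ (2 - α) / D ^ 2) := by
  have hn' : (2 : ℝ) ≤ n := by exact_mod_cast hn
  have hD : 0 < D := hd.trans_le hdD
  set s := π ^ 2 / d ^ 2
  set b := 4 * π ^ 2 / D ^ 2 + (n - 1) * π ^ 2 / d ^ 2
  set a := π ^ 2 / D ^ 2 + (n - 1) * π ^ 2 / d ^ 2
  have hs : 0 < s := by positivity
  have ha : 0 ≤ a :=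
    add_nonneg (by positivity) (div_nonneg (mul_nonneg (by linarith) (by positivity)) (by positivity))
  have hab : a < b := by
    have : 0 < π ^ 2 / D ^ 2 := by positivity
    linarith [show b - a = 3 * (π ^ 2 / D ^ 2) by ring]
  have hb : b ≤ (n + 3) * s := by
    have : 4 * π ^ 2 / D ^ 2 ≤ 4 * π ^ 2 / d ^ 2 := by gcongr
    linarith [show (n + 3) * s = 4 * π ^ 2 / d ^ 2 + (n - 1) * π ^ 2 / d ^ 2 by ring]
  have hratio : (n + 3) * s / ((n + 2) * s) ≤ 3 / 2 := by
    rw [mul_div_mul_right _ _ hs.ne', div_le_div_iff₀ (by positivity) (by norm_num)]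
    linarith
  rw [ge_iff_le, mul_rpow_div_rpow_mul_div_eq (by positivity) pi_pos hd]
  calc α * ((n + 2) * s) ^ (α / 2 - 1) * (π ^ 2 / D ^ 2)
      ≤ α * ((n + 3) * s / ((n + 2) * s) * ((n + 3) * s) ^ (α / 2 - 1)) * (π ^ 2 / D ^ 2) := by
        gcongr
        exact rpow_le_div_mul_rpow (by positivity) (by gcongr; norm_num) (by linarith)
    _ ≤ α * (3 / 2 * ((n + 3) * s) ^ (α / 2 - 1)) * (π ^ 2 / D ^ 2) := by gcongr
    _ = α / 2 * ((n + 3) * s) ^ (α / 2 - 1) * (b - a) := by ring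
    _ ≤ α / 2 * b ^ (α / 2 - 1) * (b - a) := by
        gcongr α / 2 * ?_ * _
        exact rpow_le_rpow_of_nonpos (ha.trans_lt hab) hb (by linarith)
    _ ≤ b ^ (α / 2) - a ^ (α / 2) :=
        mul_rpow_sub_one_mul_sub_le_rpow_sub_rpow ha hab.le (by positivity) (by linarith)
end

section
/- Let 0 < α ≤ 2 and let L₁ ≥ L₂ > 0 be real numbers. Set D = √(L₁² + L₂²) and d = L₂. Then (4π²/L₁² + π²/L₂²)^{α/2} − (π²/L₁² + π²/L₂²)^{α/2} ≥ (α π^α / 4^{1−α/2}) · d^{2−α}/D². -/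
open Real

/-- Concavity-type bound: for `0 ≤ β ≤ 1` and `0 < a ≤ b`,
`β * b^(β-1) * (b - a) ≤ b^β - a^β`. -/
lemma gap_concave_aux {a b β : ℝ} (ha : 0 < a) (hab : a ≤ b)
    (hβ0 : 0 ≤ β) (hβ1 : β ≤ 1) :
    β * b ^ (β - 1) * (b - a) ≤ b ^ β - a ^ β := by
  have hb : 0 < b := ha.trans_le hab
  have hs : (-1 : ℝ) ≤ a / b - 1 := by
    have : 0 ≤ a / b := by positivity
    linarith
  have hber := rpow_one_add_le_one_add_mul_self hs hβ0 hβ1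
  have h1 : (1 : ℝ) + (a / b - 1) = a / b := by ring
  rw [h1] at hber
  have hdiv : (a / b) ^ β = a ^ β / b ^ β := Real.div_rpow ha.le hb.le β
  rw [hdiv] at hber
  have hbβ : 0 < b ^ β := Real.rpow_pos_of_pos hb β
  have hsub : b ^ (β - 1) = b ^ β / b := Real.rpow_sub_one hb.ne' β
  rw [hsub]
  have hber' : a ^ β ≤ b ^ β * (1 + β * (a / b - 1)) := by
    rw [div_le_iff₀ hbβ] at hber
    linarith [hber]
  have hexp : b ^ β * (1 + β * (a / b - 1)) = b ^ β - β * (b ^ β / b) * (b - a) := by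
    field_simp
    ring
  rw [hexp] at hber'
  linarith

set_option maxHeartbeats 1000000 in
theorem gap_box_2d_lower_bound (α L₁ L₂ : ℝ) (hα : 0 < α) (hα2 : α ≤ 2)
    (hL₂ : 0 < L₂) (hL : L₂ ≤ L₁)
    (D d : ℝ) (hD : D = Real.sqrt (L₁ ^ 2 + L₂ ^ 2)) (hd : d = L₂) :
    (4 * π ^ 2 / L₁ ^ 2 + π ^ 2 / L₂ ^ 2) ^ (α / 2)
        - (π ^ 2 / L₁ ^ 2 + π ^ 2 / L₂ ^ 2) ^ (α / 2)
      ≥ α * π ^ α / (4 : ℝ) ^ (1 - α / 2) * (d ^ (2 - α) / D ^ 2) := by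
  rw [hd, hD]
  have hL₁ : 0 < L₁ := hL₂.trans_le hL
  have hπ : 0 < π := pi_pos
  have hD2 : Real.sqrt (L₁ ^ 2 + L₂ ^ 2) ^ 2 = L₁ ^ 2 + L₂ ^ 2 :=
    Real.sq_sqrt (by positivity)
  rw [hD2]
  set γ : ℝ := α / 2 - 1 with hγ
  set a : ℝ := π ^ 2 / L₁ ^ 2 + π ^ 2 / L₂ ^ 2 with ha_def
  set b : ℝ := 4 * π ^ 2 / L₁ ^ 2 + π ^ 2 / L₂ ^ 2 with hb_def
  have ha : 0 < a := by positivity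
  have hab : a ≤ b := by
    rw [ha_def, hb_def]
    gcongr
    nlinarith [sq_nonneg π]
  have hb : 0 < b := ha.trans_le hab
  have hβ0 : (0:ℝ) ≤ α / 2 := by linarith
  have hβ1 : α / 2 ≤ 1 := by linarith
  have key := gap_concave_aux ha hab hβ0 hβ1
  have hba : b - a = 3 * π ^ 2 / L₁ ^ 2 := by
    rw [hb_def, ha_def]; ring
  -- bound b ≤ 5 π² / L₂²
  have hbc : b ≤ 5 * (π ^ 2 / L₂ ^ 2) := by
    have h1 : 4 * π ^ 2 / L₁ ^ 2 ≤ 4 * π ^ 2 / L₂ ^ 2 := by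
      apply div_le_div_of_nonneg_left (by positivity) (by positivity)
      nlinarith
    have h2 : 4 * π ^ 2 / L₂ ^ 2 + π ^ 2 / L₂ ^ 2 = 5 * (π ^ 2 / L₂ ^ 2) := by ring
    rw [hb_def]; linarith
  have hγ0 : γ ≤ 0 := by rw [hγ]; linarith
  have hcb : b ^ γ ≥ (5 * (π ^ 2 / L₂ ^ 2)) ^ γ :=
    Real.rpow_le_rpow_of_nonpos hb hbc hγ0
  set t : ℝ := (π ^ 2 / L₂ ^ 2) ^ γ with ht_def
  have ht : 0 < t := Real.rpow_pos_of_pos (by positivity) γ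
  have hc5 : (5 * (π ^ 2 / L₂ ^ 2)) ^ γ = 5 ^ γ * t :=
    Real.mul_rpow (by norm_num) (by positivity)
  -- π^α * L₂^(2-α) = π^2 * t
  have hpt : π ^ α * L₂ ^ (2 - α) = π ^ 2 * t := by
    rw [ht_def, Real.div_rpow (by positivity) (by positivity)]
    rw [← Real.rpow_natCast π 2, ← Real.rpow_natCast L₂ 2,
      ← Real.rpow_mul hπ.le, ← Real.rpow_mul hL₂.le]
    push_cast
    rw [hγ]
    have h2γ : 2 * (α / 2 - 1) = α - 2 := by ring
    rw [h2γ]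
    rw [div_eq_mul_inv, ← Real.rpow_neg hL₂.le, (show -(α-2) = 2-α by ring)]
    have hππ : π ^ (2:ℝ) * π ^ (α-2) = π ^ α := by
      rw [← Real.rpow_add hπ]; norm_num
    rw [← mul_assoc, hππ]
  -- 4^(1 - α/2) relation: 1 / 4^(1-α/2) = 4^γ
  have h4 : (4 : ℝ) ^ (1 - α / 2) = ((4:ℝ) ^ γ)⁻¹ := by
    rw [← Real.rpow_neg (by norm_num), hγ]
    norm_num
  -- 4^γ ≤ 3 * 5^γ
  have h45 : (4 : ℝ) ^ γ ≤ 3 / 2 * 5 ^ γ := by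
    have h1 : (4 : ℝ) ^ γ = 5 ^ γ * (4 / 5 : ℝ) ^ γ := by
      rw [← Real.mul_rpow (by norm_num) (by norm_num)]
      norm_num
    have h2 : ((4:ℝ) / 5) ^ γ = ((5:ℝ) / 4) ^ (-γ) := by
      rw [show ((4:ℝ)/5) = ((5:ℝ)/4)⁻¹ by norm_num,
        Real.inv_rpow (by norm_num : (0:ℝ) ≤ 5/4),
        ← Real.rpow_neg (by norm_num : (0:ℝ) ≤ 5/4)]
    have h3 : ((5:ℝ) / 4) ^ (-γ) ≤ ((5:ℝ) / 4) ^ (1:ℝ) := by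
      apply Real.rpow_le_rpow_of_exponent_le (by norm_num)
      rw [hγ]; linarith
    rw [Real.rpow_one] at h3
    have h5γ : (0:ℝ) < (5:ℝ) ^ γ := Real.rpow_pos_of_pos (by norm_num) γ
    rw [h1, h2]
    nlinarith
  -- final chain
  have hgoal : α * π ^ α / (4 : ℝ) ^ (1 - α / 2) * (L₂ ^ (2 - α) / (L₁ ^ 2 + L₂ ^ 2))
      ≤ α / 2 * b ^ γ * (b - a) := by
    rw [hba, h4, div_eq_mul_inv, inv_inv]
    have hL12 : L₁ ^ 2 + L₂ ^ 2 ≤ 2 * L₁ ^ 2 := by nlinarith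
    have e1 : α * π ^ α * 4 ^ γ * (L₂ ^ (2 - α) / (L₁ ^ 2 + L₂ ^ 2))
        = α * 4 ^ γ * (π ^ 2 * t) / (L₁ ^ 2 + L₂ ^ 2) := by
      rw [← hpt]; ring
    rw [e1]
    calc α * 4 ^ γ * (π ^ 2 * t) / (L₁ ^ 2 + L₂ ^ 2)
        ≤ α * (3 / 2 * 5 ^ γ) * (π ^ 2 * t) / (L₁ ^ 2 + L₂ ^ 2) := by
          apply div_le_div_of_nonneg_right ?_ (by positivity)
          · have hpt2 : (0:ℝ) ≤ π ^ 2 * t := by positivity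
            exact mul_le_mul_of_nonneg_right
              (mul_le_mul_of_nonneg_left h45 hα.le) hpt2
      _ ≤ α * (3 / 2 * 5 ^ γ) * (π ^ 2 * t) / (L₁ ^ 2) := by
          apply div_le_div_of_nonneg_left (by positivity) (by positivity)
          nlinarith [sq_nonneg L₂]
      _ = α / 2 * ((5 * (π ^ 2 / L₂ ^ 2)) ^ γ) * (3 * π ^ 2 / L₁ ^ 2) := by
          rw [hc5]; field_simp
      _ ≤ α / 2 * b ^ γ * (3 * π ^ 2 / L₁ ^ 2) := by
          apply mul_le_mul_of_nonneg_right ?_ (by positivity)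
          apply mul_le_mul_of_nonneg_left hcb (by linarith)
  have : α / 2 * b ^ γ * (b - a) ≤ b ^ (α/2) - a ^ (α/2) := by
    rw [hγ]; exact key
  linarith [hgoal, this]
end

section
/- Let 0 < α ≤ 2 and let L₁ ≥ L₂ ≥ L₃ > 0 be real numbers. Set D = √(L₁² + L₂² + L₃²) and d = L₃. Then (4π²/L₁² + π²/L₂² + π²/L₃²)^{α/2} − (π²/L₁² + π²/L₂² + π²/L₃²)^{α/2} ≥ (α π^α / 5^{1−α/2}) · d^{2−α}/D². -/
open Real

set_option maxHeartbeats 1000000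

theorem gap_box_3d_lower_bound (α L₁ L₂ L₃ : ℝ) (hα : 0 < α) (hα2 : α ≤ 2)
    (hL₃ : 0 < L₃) (hL32 : L₃ ≤ L₂) (hL21 : L₂ ≤ L₁)
    (D d : ℝ) (hD : D = Real.sqrt (L₁ ^ 2 + L₂ ^ 2 + L₃ ^ 2)) (hd : d = L₃) :
    (4 * π ^ 2 / L₁ ^ 2 + π ^ 2 / L₂ ^ 2 + π ^ 2 / L₃ ^ 2) ^ (α / 2)
        - (π ^ 2 / L₁ ^ 2 + π ^ 2 / L₂ ^ 2 + π ^ 2 / L₃ ^ 2) ^ (α / 2)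
      ≥ α * π ^ α / (5 : ℝ) ^ (1 - α / 2) * (d ^ (2 - α) / D ^ 2) := by
  have hπ : (0:ℝ) < π := Real.pi_pos
  have hL₂ : 0 < L₂ := hL₃.trans_le hL32
  have hL₁ : 0 < L₁ := hL₂.trans_le hL21
  set s : ℝ := α / 2 with hs
  have hs0 : 0 < s := by positivity
  have hs1 : s ≤ 1 := by rw [hs]; linarith
  set P : ℝ := π ^ 2 with hP
  have hPpos : 0 < P := by positivity
  set A : ℝ := P / L₁ ^ 2 + P / L₂ ^ 2 + P / L₃ ^ 2 with hA
  set B : ℝ := 4 * P / L₁ ^ 2 + P / L₂ ^ 2 + P / L₃ ^ 2 with hB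
  have hApos : 0 < A := by positivity
  have hBpos : 0 < B := by positivity
  have hBA3 : B - A = 3 * P / L₁ ^ 2 := by rw [hA, hB]; ring
  have hAB : A ≤ B := by
    have h : 0 < 3 * P / L₁ ^ 2 := by positivity
    have h2 : A = B - 3 * P / L₁ ^ 2 := by rw [hA, hB]; ring
    rw [h2]
    linarith
  -- Step 1: Bernoulli ⇒ gap ≥ s * B^(s-1) * (B - A)
  have key1 : s * B ^ (s - 1) * (B - A) ≤ B ^ s - A ^ s := by
    have h1 : (-1 : ℝ) ≤ A / B - 1 := by
      have : 0 ≤ A / B := by positivity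
      linarith
    have hq := rpow_one_add_le_one_add_mul_self h1 hs0.le hs1
    have e : (1 : ℝ) + (A / B - 1) = A / B := by ring
    rw [e] at hq
    rw [Real.div_rpow hApos.le hBpos.le] at hq
    have hBs : (0:ℝ) < B ^ s := Real.rpow_pos_of_pos hBpos s
    have hq2 : A ^ s ≤ (1 + s * (A / B - 1)) * B ^ s := (div_le_iff₀ hBs).mp hq
    have hrw : B ^ (s - 1) = B ^ s / B := Real.rpow_sub_one hBpos.ne' s
    rw [hrw]
    have hABB : A / B - 1 = -((B - A) / B) := by field_simp; ring
    rw [hABB] at hq2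
    have : (1 + s * -((B - A) / B)) * B ^ s = B ^ s - s * (B ^ s / B) * (B - A) := by ring
    rw [this] at hq2
    linarith
  -- Step 2: B ≤ 6 P / L₃²
  have hC : B ≤ 6 * P / L₃ ^ 2 := by
    have h1 : P / L₁ ^ 2 ≤ P / L₃ ^ 2 := by
      apply div_le_div_of_nonneg_left hPpos.le (by positivity)
      nlinarith
    have h2 : P / L₂ ^ 2 ≤ P / L₃ ^ 2 := by
      apply div_le_div_of_nonneg_left hPpos.le (by positivity)
      nlinarith
    have h1' : 4 * P / L₁ ^ 2 ≤ 4 * (P / L₃ ^ 2) := by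
      rw [show (4:ℝ) * P / L₁ ^ 2 = 4 * (P / L₁ ^ 2) by ring]
      nlinarith
    rw [hB, show (6:ℝ) * P / L₃ ^ 2 = 4 * (P / L₃ ^ 2) + P / L₃ ^ 2 + P / L₃ ^ 2 by ring]
    linarith
  have key2 : (6 * P / L₃ ^ 2) ^ (s - 1) ≤ B ^ (s - 1) :=
    Real.rpow_le_rpow_of_nonpos hBpos hC (by linarith)
  -- Step 3: unfold (6P/L₃²)^(s-1)
  have e3 : (6 * P / L₃ ^ 2) ^ (s - 1)
      = 6 ^ (s - 1) * P ^ (s - 1) * (L₃ ^ 2 : ℝ) ^ (1 - s) := by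
    rw [Real.div_rpow (by positivity) (by positivity),
        Real.mul_rpow (by norm_num) hPpos.le]
    rw [show (1 : ℝ) - s = -(s - 1) by ring, Real.rpow_neg (by positivity)]
    field_simp
  -- Rewrite the goal
  have hS : (0:ℝ) < L₁ ^ 2 + L₂ ^ 2 + L₃ ^ 2 := by positivity
  have hD2 : D ^ 2 = L₁ ^ 2 + L₂ ^ 2 + L₃ ^ 2 := by
    rw [hD, Real.sq_sqrt hS.le]
  rw [ge_iff_le, hd, hD2]
  have hπα : π ^ α = P ^ s := by
    rw [hP, ← Real.rpow_natCast π 2, ← Real.rpow_mul hπ.le]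
    norm_num [hs]
    congr 1
    ring
  have hL3e : L₃ ^ (2 - α) = (L₃ ^ 2 : ℝ) ^ (1 - s) := by
    rw [← Real.rpow_natCast L₃ 2, ← Real.rpow_mul hL₃.le]
    congr 1
    push_cast
    rw [hs]
    ring
  have h5 : α * π ^ α / (5:ℝ) ^ (1 - s) = 2 * s * P ^ s * 5 ^ (s - 1) := by
    have hα' : α = 2 * s := by rw [hs]; ring
    rw [hπα, show s - 1 = -(1 - s) by ring, Real.rpow_neg (by norm_num : (0:ℝ) ≤ 5),
      div_eq_mul_inv, hα']
  have hnum : 2 * (5:ℝ) ^ (s - 1) ≤ 3 * 6 ^ (s - 1) := by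
    have h5' : (5:ℝ) ^ (s - 1) = 5 ^ s / 5 := by
      rw [Real.rpow_sub_one (by norm_num) s]
    have h6' : (6:ℝ) ^ (s - 1) = 6 ^ s / 6 := by
      rw [Real.rpow_sub_one (by norm_num) s]
    have h56 : (5:ℝ) ^ s ≤ 6 ^ s := Real.rpow_le_rpow (by norm_num) (by norm_num) hs0.le
    have h5p : (0:ℝ) < (5:ℝ) ^ s := Real.rpow_pos_of_pos (by norm_num) s
    rw [h5', h6']
    linarith
  have eP : P ^ (s - 1) * P = P ^ s := by
    rw [Real.rpow_sub_one hPpos.ne']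
    field_simp
  calc α * π ^ α / (5:ℝ) ^ (1 - s) * (L₃ ^ (2 - α) / (L₁ ^ 2 + L₂ ^ 2 + L₃ ^ 2))
      = 2 * s * P ^ s * 5 ^ (s - 1) * ((L₃ ^ 2 : ℝ) ^ (1 - s) / (L₁ ^ 2 + L₂ ^ 2 + L₃ ^ 2)) := by
        rw [h5, hL3e]
    _ ≤ 2 * s * P ^ s * 5 ^ (s - 1) * ((L₃ ^ 2 : ℝ) ^ (1 - s) / L₁ ^ 2) := by
        have h0 : 0 ≤ 2 * s * P ^ s * 5 ^ (s - 1) := by positivity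
        have h1 : (L₃ ^ 2 : ℝ) ^ (1 - s) / (L₁ ^ 2 + L₂ ^ 2 + L₃ ^ 2)
            ≤ (L₃ ^ 2 : ℝ) ^ (1 - s) / L₁ ^ 2 := by
          apply div_le_div_of_nonneg_left (by positivity) (by positivity)
          linarith [sq_nonneg L₂, sq_nonneg L₃]
        exact mul_le_mul_of_nonneg_left h1 h0
    _ = 2 * 5 ^ (s - 1) * (s * P ^ s * ((L₃ ^ 2 : ℝ) ^ (1 - s)) / L₁ ^ 2) := by ring
    _ ≤ 3 * 6 ^ (s - 1) * (s * P ^ s * ((L₃ ^ 2 : ℝ) ^ (1 - s)) / L₁ ^ 2) := by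
        apply mul_le_mul_of_nonneg_right hnum (by positivity)
    _ = s * (6 ^ (s - 1) * P ^ (s - 1) * (L₃ ^ 2 : ℝ) ^ (1 - s)) * (3 * P / L₁ ^ 2) := by
        rw [← eP]; ring
    _ = s * (6 * P / L₃ ^ 2) ^ (s - 1) * (3 * P / L₁ ^ 2) := by rw [e3]
    _ ≤ s * B ^ (s - 1) * (3 * P / L₁ ^ 2) := by
        apply mul_le_mul_of_nonneg_right (mul_le_mul_of_nonneg_left key2 hs0.le) (by positivity)
    _ = s * B ^ (s - 1) * (B - A) := by rw [hBA3]
    _ ≤ B ^ s - A ^ s := key1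
end

section
/- Let γ > 0 and 0 < α ≤ 2, and let φ₁(x) = (γ/π)^{1/4} e^{−γx²/2} with Fourier transform φ̂₁(k) = ∫_ℝ φ₁(x)e^{−ikx}dx. Then (1/(2π)) ∫_ℝ |k|^α |φ̂₁(k)|² dk + ∫_ℝ γ²x² φ₁(x)² dx = γ/2 + (γ^{α/2}/√π) Γ((1+α)/2). -/
open Real MeasureTheory

open Set in
lemma fourier_phi1_aux (γ : ℝ) (hγ : 0 < γ) (c : ℝ) (k : ℝ) :
    (∫ x : ℝ, ((c * Real.exp (-γ * x ^ 2 / 2) : ℝ) : ℂ) * Complex.exp (-Complex.I * k * x))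
      = ((c * (2 * π / γ) ^ ((1:ℝ)/2) * Real.exp (-k^2 / (2*γ)) : ℝ) : ℂ) := by
  have hb : (0:ℝ) < ((γ/2 : ℂ)).re := by norm_num [hγ]
  have h1 : ∀ x : ℝ, ((c * Real.exp (-γ * x ^ 2 / 2) : ℝ) : ℂ) * Complex.exp (-Complex.I * k * x)
      = (c : ℂ) *
        (Complex.exp (Complex.I * (-k : ℂ) * x) * Complex.exp (-(γ/2 : ℂ) * x ^ 2)) := by
    intro x
    push_cast
    rw [mul_assoc, ← Complex.exp_add, ← Complex.exp_add]
    ring_nf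
  rw [integral_congr_ae (Filter.Eventually.of_forall h1), integral_const_mul,
    fourierIntegral_gaussian hb (-k : ℂ)]
  have h2 : ((π : ℂ) / (γ/2 : ℂ)) = ((2 * π / γ : ℝ) : ℂ) := by push_cast; ring
  have h3 : ((π : ℂ) / (γ/2 : ℂ)) ^ ((1:ℂ)/2) = (((2 * π / γ) ^ ((1:ℝ)/2) : ℝ) : ℂ) := by
    rw [h2, Complex.ofReal_cpow (by positivity)]
    norm_num
  have h4 : Complex.exp (-(-k:ℂ) ^ 2 / (4 * (γ/2:ℂ))) = ((Real.exp (-k^2/(2*γ)) : ℝ) : ℂ) := by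
    rw [Complex.ofReal_exp]
    congr 1
    push_cast
    ring
  rw [h3, h4]
  push_cast
  ring

open Set in
lemma integral_abs_rpow_mul_exp_neg_mul_sq {c s : ℝ} (hc : 0 < c) (hs : -1 < s) :
    ∫ k : ℝ, |k| ^ s * Real.exp (-c * k ^ 2)
      = c ^ (-(s+1)/2) * (1/2) * Real.Gamma ((s+1)/2) * 2 := by
  have h : ∀ k : ℝ, |k| ^ s * Real.exp (-c * k ^ 2)
      = (fun u : ℝ => u ^ s * Real.exp (-c * u ^ 2)) |k| := by
    intro k; simp [sq_abs]
  rw [integral_congr_ae (.of_forall h),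
    integral_comp_abs (f := fun u : ℝ => u ^ s * Real.exp (-c * u ^ 2))]
  have h2 : ∀ x ∈ Ioi (0:ℝ), x ^ s * Real.exp (-c * x ^ 2)
      = x ^ s * Real.exp (-c * x ^ (2:ℝ)) := by
    intro x hx; rw [← Real.rpow_natCast x 2]; norm_num
  rw [setIntegral_congr_fun measurableSet_Ioi h2,
    integral_rpow_mul_exp_neg_mul_rpow two_pos hs hc]
  ring

/-- The L²-normalized ground state of the 1D harmonic oscillator `-d²/dx² + γ²x²`. -/
noncomputable def phi1 (γ : ℝ) (x : ℝ) : ℝ :=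
  (γ / Real.pi) ^ ((1 : ℝ) / 4) * Real.exp (-γ * x ^ 2 / 2)

lemma fourier_phi1 (γ : ℝ) (hγ : 0 < γ) (k : ℝ) :
    (∫ x : ℝ, (phi1 γ x : ℂ) * Complex.exp (-Complex.I * k * x))
      = (((γ / π) ^ ((1:ℝ)/4) * (2 * π / γ) ^ ((1:ℝ)/2) * Real.exp (-k^2 / (2*γ)) : ℝ) : ℂ) := by
  simpa [phi1] using fourier_phi1_aux γ hγ ((γ / π) ^ ((1:ℝ)/4)) k

theorem energy_ground_state_harmonic (γ α : ℝ) (hγ : 0 < γ) (hα : 0 < α) (hα2 : α ≤ 2) :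
    (1 / (2 * π)) * (∫ k : ℝ, |k| ^ α *
        (‖∫ x : ℝ, (phi1 γ x : ℂ) * Complex.exp (-Complex.I * k * x)‖) ^ 2)
      + ∫ x : ℝ, γ ^ 2 * x ^ 2 * (phi1 γ x) ^ 2
      = γ / 2 + γ ^ (α / 2) / Real.sqrt π * Real.Gamma ((1 + α) / 2) := by
  set d : ℝ := (γ / π) ^ ((1:ℝ)/4) * (2 * π / γ) ^ ((1:ℝ)/2) with hd_def
  have hd : 0 < d := by positivity
  -- first integral
  have hI1 : (∫ k : ℝ, |k| ^ α *
        (‖∫ x : ℝ, (phi1 γ x : ℂ) * Complex.exp (-Complex.I * k * x)‖) ^ 2)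
      = d ^ 2 * ((1/γ) ^ (-(α+1)/2) * (1/2) * Real.Gamma ((α+1)/2) * 2) := by
    have h1 : ∀ k : ℝ, |k| ^ α *
        (‖∫ x : ℝ, (phi1 γ x : ℂ) * Complex.exp (-Complex.I * k * x)‖) ^ 2
        = d ^ 2 * (|k| ^ α * Real.exp (-(1/γ) * k ^ 2)) := by
      intro k
      rw [fourier_phi1 γ hγ k, Complex.norm_real, Real.norm_eq_abs,
        abs_of_pos (by positivity : (0:ℝ) < d * Real.exp (-k^2/(2*γ)))]
      rw [mul_pow, sq (Real.exp _), ← Real.exp_add]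
      have : -k ^ 2 / (2 * γ) + -k ^ 2 / (2 * γ) = -(1/γ) * k ^ 2 := by field_simp; ring
      rw [this]
      ring
    rw [integral_congr_ae (.of_forall h1), integral_const_mul,
      integral_abs_rpow_mul_exp_neg_mul_sq (by positivity) (by linarith)]
  -- second integral
  have hI2 : (∫ x : ℝ, γ ^ 2 * x ^ 2 * (phi1 γ x) ^ 2)
      = (γ ^ 2 * ((γ/π) ^ ((1:ℝ)/4)) ^ 2) *
          (γ ^ (-((2:ℝ)+1)/2) * (1/2) * Real.Gamma (((2:ℝ)+1)/2) * 2) := by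
    have h1 : ∀ x : ℝ, γ ^ 2 * x ^ 2 * (phi1 γ x) ^ 2
        = (γ ^ 2 * ((γ/π) ^ ((1:ℝ)/4)) ^ 2) * (|x| ^ (2:ℝ) * Real.exp (-γ * x ^ 2)) := by
      intro x
      unfold phi1
      rw [mul_pow, sq (Real.exp _), ← Real.exp_add]
      have h2 : -γ * x ^ 2 / 2 + -γ * x ^ 2 / 2 = -γ * x ^ 2 := by ring
      have h3 : |x| ^ (2:ℝ) = x ^ 2 := by
        rw [show ((2:ℝ)) = ((2:ℕ):ℝ) by norm_num, Real.rpow_natCast, sq_abs]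
      rw [h2, h3]
      ring
    rw [integral_congr_ae (.of_forall h1), integral_const_mul,
      integral_abs_rpow_mul_exp_neg_mul_sq hγ (by norm_num)]
  rw [hI1, hI2]
  -- arithmetic
  have e1 : (γ:ℝ) ^ ((1:ℝ)/2) * γ ^ ((1:ℝ)/2) = γ := by
    rw [← Real.rpow_add hγ]; norm_num
  have e2 : (π:ℝ) ^ ((1:ℝ)/2) * π ^ ((1:ℝ)/2) = π := by
    rw [← Real.rpow_add pi_pos]; norm_num
  have eG : Real.Gamma (((2:ℝ)+1)/2) = Real.sqrt π / 2 := by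
    have : ((2:ℝ)+1)/2 = 1/2 + 1 := by norm_num
    rw [this, Real.Gamma_add_one (by norm_num), Real.Gamma_one_half_eq]
    ring
  have ed2 : d ^ 2 = (γ/π) ^ ((1:ℝ)/2) * (2 * π / γ) := by
    rw [hd_def, mul_pow, ← Real.rpow_natCast ((γ/π) ^ ((1:ℝ)/4)) 2,
      ← Real.rpow_natCast ((2*π/γ) ^ ((1:ℝ)/2)) 2,
      ← Real.rpow_mul (by positivity), ← Real.rpow_mul (by positivity)]
    norm_num
  have einv : ((1:ℝ)/γ) ^ (-(α+1)/2) = γ ^ (α/2) * γ ^ ((1:ℝ)/2) := by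
    rw [one_div, ← Real.rpow_neg_one γ, ← Real.rpow_mul hγ.le, ← Real.rpow_add hγ]
    congr 1
    ring
  have ediv : ((γ:ℝ)/π) ^ ((1:ℝ)/2) = γ ^ ((1:ℝ)/2) / π ^ ((1:ℝ)/2) :=
    Real.div_rpow hγ.le pi_pos.le ((1:ℝ)/2)
  have e14 : (((γ:ℝ)/π) ^ ((1:ℝ)/4)) ^ 2 = (γ/π) ^ ((1:ℝ)/2) := by
    rw [← Real.rpow_natCast ((γ/π) ^ ((1:ℝ)/4)) 2, ← Real.rpow_mul (by positivity)]
    norm_num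
  have esqrt : Real.sqrt π = π ^ ((1:ℝ)/2) := Real.sqrt_eq_rpow π
  have ec : Real.Gamma ((α+1)/2) = Real.Gamma ((1+α)/2) := by rw [add_comm]
  rw [einv, ed2, e14, ediv, eG, esqrt, ec]
  have hg2 : (γ:ℝ) ^ (-((2:ℝ)+1)/2) = (γ ^ ((1:ℝ)/2) * γ ^ ((1:ℝ)/2) * γ ^ ((1:ℝ)/2))⁻¹ := by
    rw [← Real.rpow_add hγ, ← Real.rpow_add hγ, ← Real.rpow_neg hγ.le]
    norm_num
  rw [hg2]
  have hπ : (0:ℝ) < π := pi_pos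
  have hγ12 : (0:ℝ) < γ ^ ((1:ℝ)/2) := by positivity
  have hπ12 : (0:ℝ) < π ^ ((1:ℝ)/2) := by positivity
  generalize γ ^ (α / 2) = G at *
  generalize Real.Gamma ((1 + α) / 2) = Γ at *
  generalize hg : γ ^ ((1:ℝ)/2) = g at *
  generalize hp : π ^ ((1:ℝ)/2) = p at *
  rw [← e1]
  field_simp
  ring
end

section
/- Let γ > 0 and 0 < α ≤ 2. Let φ₁(x) = (γ/π)^{1/4}e^{−γx²/2} and φ₂(x) = √(2γ)·x·(γ/π)^{1/4}e^{−γx²/2}, with Fourier transforms φ̂_l(k) = ∫_ℝ φ_l(x)e^{−ikx}dx, and for a real function u define E^{(α)}(u) = (1/(2π))∫_ℝ |k|^α |û(k)|² dk + ∫_ℝ γ²x² u(x)² dx. Then E^{(α)}(φ₂) − E^{(α)}(φ₁) = γ + (αγ^{α/2}/√π) Γ((1+α)/2). -/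
open Real MeasureTheory

/-- The L²-normalized first excited state of the 1D harmonic oscillator `-d²/dx² + γ²x²`. -/
noncomputable def phi2 (γ : ℝ) (x : ℝ) : ℝ :=
  Real.sqrt (2 * γ) * x * (γ / Real.pi) ^ ((1 : ℝ) / 4) * Real.exp (-γ * x ^ 2 / 2)

/-- The energy `E^{(α)}(u)` of a real function `u` for the 1D fractional Schrödinger
operator `(-Δ)^{α/2} + γ²x²`, computed in Fourier space with
`û(k) = ∫ u(x) e^{-ikx} dx`. -/
noncomputable def fracEnergy (α γ : ℝ) (u : ℝ → ℝ) : ℝ :=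
  (1 / (2 * Real.pi)) * (∫ k : ℝ, |k| ^ α *
      ‖∫ x : ℝ, (u x : ℂ) * Complex.exp (-Complex.I * k * x)‖ ^ 2)
    + ∫ x : ℝ, γ ^ 2 * x ^ 2 * (u x) ^ 2

open Complex Filter


lemma int_even {s b : ℝ} (hs : -1 < s) (hb : 0 < b) :
    ∫ k : ℝ, |k| ^ s * Real.exp (-b * k ^ 2) = b ^ (-(s + 1) / 2) * Real.Gamma ((s + 1) / 2) := by
  calc ∫ k : ℝ, |k| ^ s * Real.exp (-b * k ^ 2)
      = ∫ k : ℝ, (fun t : ℝ => t ^ s * Real.exp (-b * t ^ (2:ℝ))) |k| := by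
        refine integral_congr_ae (Filter.Eventually.of_forall fun k => ?_)
        simp only
        rw [show ((2:ℝ)) = ((2:ℕ):ℝ) by norm_num, Real.rpow_natCast, _root_.sq_abs]
    _ = 2 * ∫ t in Set.Ioi (0:ℝ), t ^ s * Real.exp (-b * t ^ (2:ℝ)) :=
        integral_comp_abs (f := fun t : ℝ => t ^ s * Real.exp (-b * t ^ (2:ℝ)))
    _ = b ^ (-(s + 1) / 2) * Real.Gamma ((s + 1) / 2) := by
        rw [integral_rpow_mul_exp_neg_mul_rpow two_pos hs hb]; ring

noncomputable def G (b k : ℝ) (x : ℝ) : ℂ := Complex.exp (-(b:ℂ) * x ^ 2 - Complex.I * k * x)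

lemma normG (b k x : ℝ) : ‖G b k x‖ = Real.exp (-b * x ^ 2) := by
  rw [G, Complex.norm_exp]
  congr 1
  simp [Complex.sub_re, Complex.mul_re, ← Complex.ofReal_pow]

lemma contG (b k : ℝ) : Continuous (G b k) := by
  unfold G; fun_prop

lemma intG {b : ℝ} (hb : 0 < b) (k : ℝ) : Integrable (G b k) := by
  have hb' : 0 < ((b:ℂ)).re := by rw [Complex.ofReal_re]; exact hb
  have h := integrable_cexp_quadratic hb' (-Complex.I * k) 0
  have e : (fun x : ℝ => Complex.exp (-(b:ℂ) * x ^ 2 + (-Complex.I * k) * x + 0)) = G b k := by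
    funext x; rw [G]; congr 1; ring
  rwa [e] at h

lemma intxG {b : ℝ} (hb : 0 < b) (k : ℝ) : Integrable (fun x : ℝ => (x:ℂ) * G b k x) := by
  refine Integrable.mono' ((integrable_mul_exp_neg_mul_sq hb).abs) ?_
    (Filter.Eventually.of_forall fun x => ?_)
  · exact (Complex.continuous_ofReal.mul (contG b k)).aestronglyMeasurable
  · rw [norm_mul, normG]
    simp [abs_mul, abs_of_pos (Real.exp_pos _)]

lemma sq_tendsto_atBot : Tendsto (fun x : ℝ => x ^ 2) atBot atTop := by
  have h1 : Tendsto (fun x : ℝ => -x) atBot atTop := tendsto_neg_atBot_atTop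
  have h2 : Tendsto (fun y : ℝ => y ^ 2) atTop atTop := tendsto_pow_atTop two_ne_zero
  refine (h2.comp h1).congr fun x => ?_
  simp [Function.comp, neg_pow]

lemma tendG {b : ℝ} (hb : 0 < b) (k : ℝ) :
    Tendsto (G b k) atTop (nhds 0) ∧ Tendsto (G b k) atBot (nhds 0) := by
  have key : ∀ l : Filter ℝ, Tendsto (fun x : ℝ => x ^ 2) l atTop →
      Tendsto (G b k) l (nhds 0) := by
    intro l hl
    rw [tendsto_zero_iff_norm_tendsto_zero]
    simp only [normG]
    refine Real.tendsto_exp_atBot.comp ?_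
    exact hl.const_mul_atTop_of_neg (by linarith : -b < 0)
  exact ⟨key _ (tendsto_pow_atTop two_ne_zero), key _ sq_tendsto_atBot⟩

lemma gauss_hasDeriv (b k : ℝ) (x : ℝ) :
    HasDerivAt (G b k) ((-2 * b * x - Complex.I * k) * G b k x) x := by
  have h1 : HasDerivAt (fun x : ℝ => ((x : ℂ))) 1 x := Complex.ofRealCLM.hasDerivAt
  have h3 : HasDerivAt (fun x : ℝ => -(b:ℂ) * (x:ℂ) ^ 2) (-(b:ℂ) * (2 * x)) x := by
    have := (h1.fun_mul h1).const_mul (-(b:ℂ))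
    convert this using 2 with y
    · rfl
    · ring
    · ring
  have h4 : HasDerivAt (fun x : ℝ => Complex.I * (k:ℂ) * (x:ℂ)) (Complex.I * k) x := by
    have := h1.const_mul (Complex.I * (k:ℂ))
    simpa using this
  have h2 := (h3.fun_sub h4).cexp
  rw [show (fun x : ℝ => Complex.exp ((fun x : ℝ => -(b:ℂ) * (x:ℂ) ^ 2) x
      - (fun x : ℝ => Complex.I * (k:ℂ) * (x:ℂ)) x)) = G b k from rfl] at h2
  convert h2 using 1
  rw [G]
  push_cast; ring

lemma intDerivG {b : ℝ} (hb : 0 < b) (k : ℝ) :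
    Integrable (fun x : ℝ => (-2 * b * x - Complex.I * k) * G b k x) := by
  have h := ((intxG hb k).const_mul (-2 * (b:ℂ))).sub ((intG hb k).const_mul (Complex.I * k))
  refine h.congr (Filter.Eventually.of_forall fun x => ?_)
  simp only [Pi.sub_apply]
  ring

lemma integral_derivG {b : ℝ} (hb : 0 < b) (k : ℝ) :
    ∫ x : ℝ, (-2 * b * x - Complex.I * k) * G b k x = 0 := by
  have hint := intDerivG hb k
  have L1 : Tendsto (fun R : ℝ => ∫ x in (-R)..R, (-2 * b * x - Complex.I * k) * G b k x)
      atTop (nhds (∫ x : ℝ, (-2 * b * x - Complex.I * k) * G b k x)) :=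
    intervalIntegral_tendsto_integral hint tendsto_neg_atTop_atBot tendsto_id
  have L2 : ∀ R : ℝ, (∫ x in (-R)..R, (-2 * b * x - Complex.I * k) * G b k x)
      = G b k R - G b k (-R) := fun R =>
    intervalIntegral.integral_eq_sub_of_hasDerivAt (fun x _ => gauss_hasDeriv b k x)
      hint.intervalIntegrable
  have L3 : Tendsto (fun R : ℝ => G b k R - G b k (-R)) atTop (nhds 0) := by
    have := ((tendG hb k).1.sub ((tendG hb k).2.comp tendsto_neg_atTop_atBot))
    simpa using this
  have := tendsto_nhds_unique L1 (by simpa only [L2] using L3)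
  exact this

lemma ft_xgauss {b : ℝ} (hb : 0 < b) (k : ℝ) :
    ∫ x : ℝ, (x:ℂ) * G b k x
      = -Complex.I * k / (2 * b) * ∫ x : ℝ, G b k x := by
  have key : ∫ x : ℝ, ((-2 * (b:ℂ)) * ((x:ℂ) * G b k x) - (Complex.I * k) * G b k x) = 0 := by
    rw [← integral_derivG hb k]
    congr 1 with x
    push_cast; ring
  rw [integral_sub ((intxG hb k).const_mul _) ((intG hb k).const_mul _),
    integral_const_mul, integral_const_mul] at key
  have hb' : (2 * (b:ℂ)) ≠ 0 := by
    simp only [ne_eq, mul_eq_zero]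
    push_neg
    exact ⟨two_ne_zero, by exact_mod_cast hb.ne'⟩
  rw [div_mul_eq_mul_div, eq_div_iff hb']
  linear_combination -key

lemma ftG {b : ℝ} (hb : 0 < b) (k : ℝ) :
    ∫ x : ℝ, G b k x
      = ↑((π / b) ^ ((1:ℝ)/2)) * Complex.exp (((-k ^ 2 / (4 * b) : ℝ) : ℂ)) := by
  have h := fourierIntegral_gaussian (b := (b:ℂ)) (by simpa using hb) (-(k:ℂ))
  have e1 : (∫ x : ℝ, G b k x)
      = ∫ x : ℝ, Complex.exp (Complex.I * (-(k:ℂ)) * x) * Complex.exp (-(b:ℂ) * x ^ 2) := by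
    congr 1 with x
    rw [G, ← Complex.exp_add]
    ring_nf
  rw [e1, h]
  have hpb : (0:ℝ) ≤ π / b := le_of_lt (div_pos Real.pi_pos hb)
  rw [Complex.ofReal_cpow hpb]
  push_cast
  ring_nf

lemma absG {b : ℝ} (hb : 0 < b) (k : ℝ) :
    ‖∫ x : ℝ, G b k x‖ = (π / b) ^ ((1:ℝ)/2) * Real.exp (-k ^ 2 / (4 * b)) := by
  rw [ftG hb k, norm_mul, Complex.norm_real, Real.norm_eq_abs, Complex.norm_exp]
  rw [_root_.abs_of_nonneg (Real.rpow_nonneg (le_of_lt (div_pos Real.pi_pos hb)) _)]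
  congr 1

lemma ft_phi1 {γ : ℝ} (hγ : 0 < γ) (k : ℝ) :
    (∫ x : ℝ, (phi1 γ x : ℂ) * Complex.exp (-Complex.I * k * x))
      = ↑((γ/π) ^ ((1:ℝ)/4)) * ∫ x : ℝ, G (γ/2) k x := by
  rw [← integral_const_mul]
  congr 1 with x
  rw [phi1, G, Complex.ofReal_mul, Complex.ofReal_exp, mul_assoc, ← Complex.exp_add]
  congr 2
  push_cast
  ring

lemma ft_phi2 {γ : ℝ} (hγ : 0 < γ) (k : ℝ) :
    (∫ x : ℝ, (phi2 γ x : ℂ) * Complex.exp (-Complex.I * k * x))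
      = ↑(Real.sqrt (2*γ) * (γ/π) ^ ((1:ℝ)/4)) * (-Complex.I * k / γ * ∫ x : ℝ, G (γ/2) k x) := by
  have hb : 0 < γ/2 := by linarith
  have hx := ft_xgauss hb k
  have h2 : (2:ℂ) * (((γ/2:ℝ)):ℂ) = (γ:ℂ) := by push_cast; ring
  rw [h2] at hx
  rw [← hx, ← integral_const_mul]
  congr 1 with x
  rw [phi2, G]
  simp only [Complex.ofReal_mul, Complex.ofReal_exp]
  rw [show ((-γ*x^2/2 : ℝ):ℂ) = -(((γ/2:ℝ)):ℂ)*(x:ℂ)^2 from by push_cast; ring]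
  rw [show (-(((γ/2:ℝ)):ℂ)*(x:ℂ)^2 - Complex.I*(k:ℂ)*(x:ℂ))
      = (-(((γ/2:ℝ)):ℂ)*(x:ℂ)^2) + (-Complex.I*(k:ℂ)*(x:ℂ)) from by ring, Complex.exp_add]
  ring

lemma abs1_sq {γ : ℝ} (hγ : 0 < γ) (k : ℝ) :
    ‖∫ x : ℝ, (phi1 γ x : ℂ) * Complex.exp (-Complex.I * k * x)‖ ^ 2
      = ((γ/π) ^ ((1:ℝ)/2) * (2*π/γ)) * Real.exp (-(1/γ) * k ^ 2) := by
  have hb : 0 < γ/2 := by linarith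
  rw [ft_phi1 hγ k, norm_mul, Complex.norm_real, Real.norm_eq_abs, absG hb k]
  rw [_root_.abs_of_nonneg (Real.rpow_nonneg (le_of_lt (div_pos hγ Real.pi_pos)) _)]
  rw [mul_pow, mul_pow, ← Real.rpow_natCast ((γ/π) ^ ((1:ℝ)/4)) 2,
    ← Real.rpow_natCast ((π/(γ/2)) ^ ((1:ℝ)/2)) 2,
    ← Real.rpow_mul (le_of_lt (div_pos hγ Real.pi_pos)),
    ← Real.rpow_mul (le_of_lt (div_pos Real.pi_pos hb)),
    ← Real.exp_nat_mul]
  norm_num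
  rw [show π / (γ/2) = 2*π/γ from by field_simp,
    show (2:ℝ) * (-k^2/(4*(γ/2))) = -(γ⁻¹*k^2) from by field_simp; ring]
  ring_nf

lemma abs2_sq {γ : ℝ} (hγ : 0 < γ) (k : ℝ) :
    ‖∫ x : ℝ, (phi2 γ x : ℂ) * Complex.exp (-Complex.I * k * x)‖ ^ 2
      = (2 * γ * (γ/π) ^ ((1:ℝ)/2) * (2*π/γ) / γ^2) * (|k| ^ (2:ℝ) * Real.exp (-(1/γ) * k ^ 2)) := by
  have hb : 0 < γ/2 := by linarith
  rw [ft_phi2 hγ k, norm_mul, Complex.norm_real, Real.norm_eq_abs, norm_mul, absG hb k]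
  rw [norm_div, Complex.norm_real, Real.norm_eq_abs]
  rw [show ‖-Complex.I * k‖ = |k| from by
    rw [neg_mul, norm_neg, norm_mul, Complex.norm_I, one_mul, Complex.norm_real, Real.norm_eq_abs]]
  rw [_root_.abs_of_nonneg (mul_nonneg (Real.sqrt_nonneg _) (Real.rpow_nonneg (le_of_lt (div_pos hγ Real.pi_pos)) _))]
  rw [_root_.abs_of_pos hγ]
  rw [show |k| ^ (2:ℝ) = |k|^(2:ℕ) from by
    rw [show ((2:ℝ)) = ((2:ℕ):ℝ) by norm_num, Real.rpow_natCast]]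
  simp only [mul_pow, div_pow]
  rw [Real.sq_sqrt (by linarith : (0:ℝ) ≤ 2*γ)]
  rw [← Real.rpow_natCast ((γ/π) ^ ((1:ℝ)/4)) 2,
    ← Real.rpow_natCast ((π/(γ/2)) ^ ((1:ℝ)/2)) 2,
    ← Real.rpow_mul (le_of_lt (div_pos hγ Real.pi_pos)),
    ← Real.rpow_mul (le_of_lt (div_pos Real.pi_pos hb)),
    ← Real.exp_nat_mul]
  norm_num
  rw [show π / (γ/2) = 2*π/γ from by field_simp,
    show (2:ℝ) * (-k^2/(4*(γ/2))) = -(γ⁻¹*k^2) from by field_simp; ring]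
  ring_nf

lemma abs_rpow_two (x : ℝ) : |x| ^ (2:ℝ) = x ^ 2 := by
  rw [show ((2:ℝ)) = ((2:ℕ):ℝ) by norm_num, Real.rpow_natCast, _root_.sq_abs]

lemma abs_rpow_four (x : ℝ) : |x| ^ (4:ℝ) = x ^ 4 := by
  rw [show ((4:ℝ)) = ((4:ℕ):ℝ) by norm_num, Real.rpow_natCast,
    show |x| ^ (4:ℕ) = (|x| ^ 2) ^ 2 from by ring, _root_.sq_abs]
  ring

lemma kinetic_int {γ s C : ℝ} (hγ : 0 < γ) (hs : -1 < s) :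
    ∫ k : ℝ, |k| ^ s * (C * Real.exp (-(1/γ) * k ^ 2))
      = C * (γ ^ ((s+1)/2) * Real.Gamma ((s+1)/2)) := by
  have h1 : (0:ℝ) < 1/γ := by positivity
  calc ∫ k : ℝ, |k| ^ s * (C * Real.exp (-(1/γ) * k ^ 2))
      = ∫ k : ℝ, C * (|k| ^ s * Real.exp (-(1/γ) * k ^ 2)) := by congr 1 with k; ring
    _ = C * ((1/γ) ^ (-(s+1)/2) * Real.Gamma ((s+1)/2)) := by
        rw [integral_const_mul, int_even hs h1]
    _ = _ := by
        rw [one_div, Real.inv_rpow hγ.le, ← Real.rpow_neg hγ.le]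
        congr 2
        ring

lemma pot1 {γ : ℝ} (hγ : 0 < γ) :
    ∫ x : ℝ, γ^2 * x^2 * (phi1 γ x)^2
      = (γ^2 * (γ/π) ^ ((1:ℝ)/2)) * (γ ^ (-(3:ℝ)/2) * Real.Gamma ((3:ℝ)/2)) := by
  have e : ∀ x : ℝ, γ^2 * x^2 * (phi1 γ x)^2
      = (γ^2 * (γ/π) ^ ((1:ℝ)/2)) * (|x| ^ (2:ℝ) * Real.exp (-γ * x^2)) := by
    intro x
    rw [phi1, mul_pow, ← Real.exp_nat_mul, abs_rpow_two,
      ← Real.rpow_natCast ((γ/π) ^ ((1:ℝ)/4)) 2,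
      ← Real.rpow_mul (le_of_lt (div_pos hγ Real.pi_pos)),
      show ((2:ℕ):ℝ) * (-γ * x^2/2) = -γ * x^2 from by push_cast; ring]
    norm_num
    ring
  rw [show (∫ x : ℝ, γ^2 * x^2 * (phi1 γ x)^2)
      = ∫ x : ℝ, (γ^2 * (γ/π) ^ ((1:ℝ)/2)) * (|x| ^ (2:ℝ) * Real.exp (-γ * x^2)) from by
    congr 1 with x; rw [e x]]
  rw [integral_const_mul, int_even (by norm_num : (-1:ℝ) < 2) hγ]
  norm_num

lemma pot2 {γ : ℝ} (hγ : 0 < γ) :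
    ∫ x : ℝ, γ^2 * x^2 * (phi2 γ x)^2
      = (γ^2 * (2*γ) * (γ/π) ^ ((1:ℝ)/2)) * (γ ^ (-(5:ℝ)/2) * Real.Gamma ((5:ℝ)/2)) := by
  have e : ∀ x : ℝ, γ^2 * x^2 * (phi2 γ x)^2
      = (γ^2 * (2*γ) * (γ/π) ^ ((1:ℝ)/2)) * (|x| ^ (4:ℝ) * Real.exp (-γ * x^2)) := by
    intro x
    rw [phi2, mul_pow, mul_pow, mul_pow, ← Real.exp_nat_mul, abs_rpow_four,
      Real.sq_sqrt (by linarith : (0:ℝ) ≤ 2*γ),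
      ← Real.rpow_natCast ((γ/π) ^ ((1:ℝ)/4)) 2,
      ← Real.rpow_mul (le_of_lt (div_pos hγ Real.pi_pos)),
      show ((2:ℕ):ℝ) * (-γ * x^2/2) = -γ * x^2 from by push_cast; ring]
    norm_num
    ring
  rw [show (∫ x : ℝ, γ^2 * x^2 * (phi2 γ x)^2)
      = ∫ x : ℝ, (γ^2 * (2*γ) * (γ/π) ^ ((1:ℝ)/2)) * (|x| ^ (4:ℝ) * Real.exp (-γ * x^2)) from by
    congr 1 with x; rw [e x]]
  rw [integral_const_mul, int_even (by norm_num : (-1:ℝ) < 4) hγ]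
  norm_num

theorem fundamental_gap_harmonic_trial (γ α : ℝ) (hγ : 0 < γ) (hα : 0 < α) (hα2 : α ≤ 2) :
    fracEnergy α γ (phi2 γ) - fracEnergy α γ (phi1 γ)
      = γ + α * γ ^ (α / 2) / Real.sqrt π * Real.Gamma ((1 + α) / 2) := by
  have hπ := Real.pi_pos
  have k1 : (∫ k : ℝ, |k| ^ α *
        ‖∫ x : ℝ, (phi1 γ x : ℂ) * Complex.exp (-Complex.I * k * x)‖ ^ 2)
      = ((γ/π) ^ ((1:ℝ)/2) * (2*π/γ)) * (γ ^ ((α+1)/2) * Real.Gamma ((α+1)/2)) := by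
    rw [show (∫ k : ℝ, |k| ^ α *
          ‖∫ x : ℝ, (phi1 γ x : ℂ) * Complex.exp (-Complex.I * k * x)‖ ^ 2)
        = ∫ k : ℝ, |k| ^ α * (((γ/π) ^ ((1:ℝ)/2) * (2*π/γ)) * Real.exp (-(1/γ) * k ^ 2)) from by
      congr 1 with k; rw [abs1_sq hγ k]]
    exact kinetic_int hγ (by linarith)
  have k2 : (∫ k : ℝ, |k| ^ α *
        ‖∫ x : ℝ, (phi2 γ x : ℂ) * Complex.exp (-Complex.I * k * x)‖ ^ 2)
      = (2 * γ * (γ/π) ^ ((1:ℝ)/2) * (2*π/γ) / γ^2)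
          * (γ ^ ((α+2+1)/2) * Real.Gamma ((α+2+1)/2)) := by
    rw [show (∫ k : ℝ, |k| ^ α *
          ‖∫ x : ℝ, (phi2 γ x : ℂ) * Complex.exp (-Complex.I * k * x)‖ ^ 2)
        = ∫ k : ℝ, |k| ^ (α+2) * ((2 * γ * (γ/π) ^ ((1:ℝ)/2) * (2*π/γ) / γ^2)
            * Real.exp (-(1/γ) * k ^ 2)) from by
      congr 1 with k
      rw [abs2_sq hγ k, Real.rpow_add' (abs_nonneg k) (by linarith : α + 2 ≠ 0)]
      ring]
    exact kinetic_int hγ (by linarith)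
  simp only [fracEnergy]
  rw [k1, k2, pot1 hγ, pot2 hγ]
  rw [show (α+2+1)/2 = (α+1)/2 + 1 from by ring,
    Real.Gamma_add_one (by positivity : ((α+1)/2 : ℝ) ≠ 0)]
  rw [show ((5:ℝ)/2) = 3/2 + 1 from by norm_num,
    Real.Gamma_add_one (by norm_num : ((3:ℝ)/2 : ℝ) ≠ 0),
    show ((3:ℝ)/2) = 1/2 + 1 from by norm_num,
    Real.Gamma_add_one (by norm_num : ((1:ℝ)/2 : ℝ) ≠ 0), Real.Gamma_one_half_eq]
  rw [show (1+α)/2 = (α+1)/2 from by ring]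
  -- rpow algebra
  rw [Real.div_rpow hγ.le hπ.le, Real.sqrt_eq_rpow]
  rw [show γ ^ ((α+1)/2 + 1) = γ ^ (α/2) * γ ^ ((1:ℝ)/2) * γ from by
    rw [Real.rpow_add hγ, Real.rpow_one, ← Real.rpow_add hγ]; congr 2; ring]
  rw [show γ ^ ((α+1)/2) = γ ^ (α/2) * γ ^ ((1:ℝ)/2) from by
    rw [← Real.rpow_add hγ]; congr 1; ring]
  rw [show γ ^ (-(3:ℝ)/2) = (γ * γ ^ ((1:ℝ)/2))⁻¹ from by
    rw [show (-(3:ℝ)/2) = -((3:ℝ)/2) from by ring, Real.rpow_neg hγ.le]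
    congr 1
    rw [show ((3:ℝ)/2) = 1 + 1/2 from by norm_num, Real.rpow_add hγ, Real.rpow_one]]
  rw [show γ ^ (-(5:ℝ)/2) = (γ^2 * γ ^ ((1:ℝ)/2))⁻¹ from by
    rw [show (-(5:ℝ)/2) = -((5:ℝ)/2) from by ring, Real.rpow_neg hγ.le]
    congr 1
    rw [show ((5:ℝ)/2) = 2 + 1/2 from by norm_num, Real.rpow_add hγ]
    norm_num]
  have hB : γ ^ ((1:ℝ)/2) * γ ^ ((1:ℝ)/2) = γ := by
    rw [← Real.rpow_add hγ]; norm_num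
  have hQ : π ^ ((1:ℝ)/2) * π ^ ((1:ℝ)/2) = π := by
    rw [← Real.rpow_add hπ]; norm_num
  have hBpos : 0 < γ ^ ((1:ℝ)/2) := Real.rpow_pos_of_pos hγ _
  have hQpos : 0 < π ^ ((1:ℝ)/2) := Real.rpow_pos_of_pos hπ _
  set A := γ ^ (α/2) with hAdef
  set B := γ ^ ((1:ℝ)/2) with hBdef
  set Q := π ^ ((1:ℝ)/2) with hQdef
  rw [← hB, ← hQ]
  field_simp
  ring
end
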